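/- Let d_w be a path metric on a connected locally finite tree with w > 0 on edges. Then for every vertex x ∈ X, the distance from x to the metric (Cauchy) boundary equals the infimum of lengths L_w(γ) = ∑_{n} w(x_n,x_{n+1}) over all infinite paths γ starting at x (with the convention that the distance is ∞ if the boundary is empty). -/
import Mathlib


open ENNReal

/-- The `w`-length of a walk in a simple graph. -/
noncomputable def walkLength {X : Type*} {G : SimpleGraph X} (w : X → X → ℝ) {x y : X}
    (q : G.Walk x y) : ℝ :=
  (q.darts.map fun d => w d.toProd.1 d.toProd.2).sum

section aux

variable {X : Type*} {G : SimpleGraph X} (w : X → X → ℝ)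

lemma walkLength_nil {x : X} : walkLength w (SimpleGraph.Walk.nil : G.Walk x x) = 0 := by
  simp [walkLength]

lemma walkLength_cons {x y z : X} (h : G.Adj x y) (q : G.Walk y z) :
    walkLength w (SimpleGraph.Walk.cons h q) = w x y + walkLength w q := by
  simp [walkLength]

lemma walkLength_append {x y z : X} (p : G.Walk x y) (q : G.Walk y z) :
    walkLength w (p.append q) = walkLength w p + walkLength w q := by
  simp [walkLength, SimpleGraph.Walk.darts_append]

lemma walkLength_nonneg (hw_nonneg : ∀ x y, 0 ≤ w x y) {x y : X} (q : G.Walk x y) :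
    0 ≤ walkLength w q := by
  apply List.sum_nonneg
  intro a ha
  simp only [List.mem_map] at ha
  obtain ⟨d, -, rfl⟩ := ha
  exact hw_nonneg _ _

lemma walkLength_eq_sum {x y : X} (q : G.Walk x y) :
    walkLength w q = ∑ i ∈ Finset.range q.length, w (q.getVert i) (q.getVert (i + 1)) := by
  induction q with
  | nil => simp [walkLength]
  | cons h q ih =>
    rw [walkLength_cons, SimpleGraph.Walk.length_cons, Finset.sum_range_succ']
    simp only [SimpleGraph.Walk.getVert_cons_succ, SimpleGraph.Walk.getVert_zero, ih]
    ring

lemma exists_adj_le (hw_nonneg : ∀ x y, 0 ≤ w x y) {a b : X} (q : G.Walk a b) :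
    a ≠ b → ∃ u, G.Adj u b ∧ w u b ≤ walkLength w q := by
  induction q with
  | nil => intro h; exact absurd rfl h
  | @cons u v b h q ih =>
    intro _
    rcases eq_or_ne v b with hvb | hvb
    · subst hvb
      exact ⟨u, h, by
        rw [walkLength_cons]
        linarith [walkLength_nonneg w hw_nonneg q]⟩
    · obtain ⟨u', hu', hle⟩ := ih hvb
      refine ⟨u', hu', ?_⟩
      rw [walkLength_cons]
      linarith [hw_nonneg u v]

variable [MetricSpace X]

lemma dist_le_walkLength (hw_nonneg : ∀ x y, 0 ≤ w x y)
    (hdist : ∀ x y : X, dist x y = sInf {L : ℝ | ∃ q : G.Walk x y, L = walkLength w q})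
    {a b : X} (q : G.Walk a b) : dist a b ≤ walkLength w q := by
  rw [hdist]
  refine csInf_le ⟨0, ?_⟩ ⟨q, rfl⟩
  rintro L ⟨q', rfl⟩
  exact walkLength_nonneg w hw_nonneg q'

lemma dist_le_w_of_adj (hw_nonneg : ∀ x y, 0 ≤ w x y)
    (hdist : ∀ x y : X, dist x y = sInf {L : ℝ | ∃ q : G.Walk x y, L = walkLength w q})
    {a b : X} (h : G.Adj a b) : dist a b ≤ w a b := by
  have := dist_le_walkLength w hw_nonneg hdist (SimpleGraph.Walk.cons h SimpleGraph.Walk.nil)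
  rwa [walkLength_cons, walkLength_nil, add_zero] at this

lemma exists_walk_lt (hc : G.Preconnected)
    (hdist : ∀ x y : X, dist x y = sInf {L : ℝ | ∃ q : G.Walk x y, L = walkLength w q})
    (a b : X) {ε : ℝ} (hε : 0 < ε) : ∃ q : G.Walk a b, walkLength w q < dist a b + ε := by
  have hne : {L : ℝ | ∃ q : G.Walk a b, L = walkLength w q}.Nonempty := by
    obtain ⟨q⟩ := hc a b
    exact ⟨walkLength w q, q, rfl⟩
  obtain ⟨L, ⟨q, rfl⟩, hL⟩ := Real.lt_sInf_add_pos hne hε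
  exact ⟨q, by rw [hdist]; exact hL⟩

/-- There is a uniform positive lower bound on distances to a fixed non-isolated vertex. -/
lemma exists_delta (hc : G.Preconnected) (hlf : ∀ x : X, (G.neighborSet x).Finite)
    (hw_nonneg : ∀ x y, 0 ≤ w x y) (hw_pos : ∀ x y, G.Adj x y → 0 < w x y)
    (hdist : ∀ x y : X, dist x y = sInf {L : ℝ | ∃ q : G.Walk x y, L = walkLength w q})
    (y : X) (hex : ∃ z : X, z ≠ y) : ∃ δ > 0, ∀ z : X, z ≠ y → δ ≤ dist z y := by
  obtain ⟨z₀, hz₀⟩ := hex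
  obtain ⟨q₀⟩ := hc z₀ y
  obtain ⟨u₀, hu₀, -⟩ := exists_adj_le w hw_nonneg q₀ hz₀
  have hfin := hlf y
  have hne : hfin.toFinset.Nonempty := ⟨u₀, by
    simp only [Set.Finite.mem_toFinset, SimpleGraph.mem_neighborSet]; exact hu₀.symm⟩
  refine ⟨hfin.toFinset.inf' hne (fun u => w u y), ?_, ?_⟩
  · rw [gt_iff_lt, Finset.lt_inf'_iff]
    intro u hu
    simp only [Set.Finite.mem_toFinset, SimpleGraph.mem_neighborSet] at hu
    exact hw_pos _ _ hu.symm
  · intro z hz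
    rw [hdist]
    apply le_csInf
    · obtain ⟨q⟩ := hc z y
      exact ⟨walkLength w q, q, rfl⟩
    · rintro L ⟨q, rfl⟩
      obtain ⟨u, hu, hle⟩ := exists_adj_le w hw_nonneg q hz
      refine le_trans (Finset.inf'_le _ ?_) hle
      simp only [Set.Finite.mem_toFinset, SimpleGraph.mem_neighborSet]
      exact hu.symm

end aux

/-- On a connected locally finite tree with path metric `d_w` (`w > 0` on edges),
the distance from a vertex `x` to the metric (Cauchy) boundary equals the infimum
of lengths of infinite paths starting at `x` (both sides being `∞` if there is
no boundary point, resp. no infinite path of finite length). -/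
theorem tree_dist_to_boundary {X : Type*} [Countable X] [MetricSpace X]
    (G : SimpleGraph X) (hT : G.IsTree) (hlf : ∀ x : X, (G.neighborSet x).Finite)
    (o : X) (w : X → X → ℝ) (hw_symm : ∀ x y, w x y = w y x)
    (hw_nonneg : ∀ x y, 0 ≤ w x y) (hw_pos : ∀ x y, G.Adj x y → 0 < w x y)
    (hdist : ∀ x y : X, dist x y = sInf {L : ℝ | ∃ q : G.Walk x y, L = walkLength w q}) :
    ∀ x : X,
      EMetric.infEdist (↑x : UniformSpace.Completion X)
          (Set.range ((↑) : X → UniformSpace.Completion X))ᶜ =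
        ⨅ (γ : ℕ → X) (_ : γ 0 = x ∧ ∀ n, G.Adj (γ n) (γ (n + 1))),
          ∑' n, ENNReal.ofReal (w (γ n) (γ (n + 1))) := by
  have hc : G.Preconnected := hT.isConnected.preconnected
  intro x
  apply le_antisymm
  · -- infEdist ≤ each path length
    refine le_iInf fun γ => le_iInf fun hγ => ?_
    obtain ⟨hγ0, hadj⟩ := hγ
    set S := ∑' n, ENNReal.ofReal (w (γ n) (γ (n + 1))) with hS
    rcases eq_or_ne S ⊤ with htop | htop
    · rw [htop]; exact le_top
    set f : ℕ → ℝ := fun n => w (γ n) (γ (n + 1)) with hf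
    have hf0 : ∀ n, 0 ≤ f n := fun n => hw_nonneg _ _
    have hofReal : (fun n => ((f n).toNNReal : ℝ≥0∞)) = fun n => ENNReal.ofReal (f n) := rfl
    have hsum' : Summable (fun n => (f n).toNNReal) := by
      apply tsum_coe_ne_top_iff_summable.1
      rw [hofReal]
      exact htop
    have hsum : Summable f := by
      refine Summable.congr (NNReal.summable_coe.2 hsum') fun n => Real.coe_toNNReal _ (hf0 n)
    have hstep : ∀ n, dist (γ n) (γ (n + 1)) ≤ f n :=
      fun n => dist_le_w_of_adj w hw_nonneg hdist (hadj n)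
    have hcs : CauchySeq γ := cauchySeq_of_dist_le_of_summable f hstep hsum
    have hcs' : CauchySeq (fun n => (↑(γ n) : UniformSpace.Completion X)) :=
      hcs.map (UniformSpace.Completion.uniformContinuous_coe X)
    obtain ⟨p, htend⟩ := cauchySeq_tendsto_of_complete hcs'
    have pmem : p ∈ (Set.range ((↑) : X → UniformSpace.Completion X))ᶜ := by
      intro hmem
      obtain ⟨y, rfl⟩ := hmem
      have htd : Filter.Tendsto (fun n => dist (γ n) y) Filter.atTop (nhds 0) := by
        have := htend.dist (tendsto_const_nhds
          (x := (↑y : UniformSpace.Completion X)) (f := Filter.atTop))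
        simp only [dist_self] at this
        refine this.congr fun n => ?_
        exact UniformSpace.Completion.dist_eq (γ n) y
      obtain ⟨δ, hδpos, hδ⟩ := exists_delta w hc hlf hw_nonneg hw_pos hdist y
        (by
          rcases eq_or_ne (γ 0) y with h0 | h0
          · exact ⟨γ 1, by rw [← h0]; exact (hadj 0).ne.symm⟩
          · exact ⟨γ 0, h0⟩)
      have hev : ∀ᶠ n in Filter.atTop, dist (γ n) y < δ :=
        htd.eventually_lt_const hδpos
      obtain ⟨N, hN⟩ := Filter.eventually_atTop.1 hev
      have hall : ∀ n, N ≤ n → γ n = y := by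
        intro n hn
        by_contra hne
        exact absurd (hN n hn) (not_lt.2 (hδ (γ n) hne))
      exact (hadj N).ne (by rw [hall N le_rfl, hall (N + 1) (Nat.le_succ_of_le le_rfl)])
    refine le_trans (EMetric.infEdist_le_edist_of_mem pmem) ?_
    have hdistx : ∀ n, dist x (γ n) ≤ ∑ i ∈ Finset.range n, f i := by
      intro n
      induction n with
      | zero => simp [← hγ0]
      | succ n ih =>
        rw [Finset.sum_range_succ]
        calc dist x (γ (n + 1)) ≤ dist x (γ n) + dist (γ n) (γ (n + 1)) := dist_triangle _ _ _
          _ ≤ (∑ i ∈ Finset.range n, f i) + f n := add_le_add ih (hstep n)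
    have hbound : ∀ n, edist (↑x : UniformSpace.Completion X) ↑(γ n) ≤ S := by
      intro n
      rw [edist_dist, UniformSpace.Completion.dist_eq]
      calc ENNReal.ofReal (dist x (γ n)) ≤ ENNReal.ofReal (∑ i ∈ Finset.range n, f i) :=
            ENNReal.ofReal_le_ofReal (hdistx n)
        _ = ∑ i ∈ Finset.range n, ENNReal.ofReal (f i) :=
            ENNReal.ofReal_sum_of_nonneg fun i _ => hf0 i
        _ ≤ S := ENNReal.sum_le_tsum _
    have : Filter.Tendsto (fun n => edist (↑x : UniformSpace.Completion X) ↑(γ n))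
        Filter.atTop (nhds (edist (↑x : UniformSpace.Completion X) p)) :=
      Filter.Tendsto.edist tendsto_const_nhds htend
    exact le_of_tendsto this (Filter.Eventually.of_forall hbound)
  · -- the infimum over paths is at most the distance to each boundary point
    refine EMetric.le_infEdist.2 fun p hp => ?_
    refine ENNReal.le_of_forall_pos_le_add fun ε hε hlt => ?_
    set e : ℝ := (edist (↑x : UniformSpace.Completion X) p).toReal with he
    have hnetop : edist (↑x : UniformSpace.Completion X) p ≠ ⊤ := hlt.ne
    have he0 : 0 ≤ e := ENNReal.toReal_nonneg
    set ε' : ℝ := (ε : ℝ) / 6 with hε'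
    have hε'pos : 0 < ε' := by
      have : (0:ℝ) < (ε:ℝ) := NNReal.coe_pos.2 hε
      positivity
    have hppos : ∀ z : X, 0 < edist (↑z : UniformSpace.Completion X) p :=
      fun z => edist_pos.2 fun h => hp ⟨z, h⟩
    have hclos : p ∈ closure (Set.range ((↑) : X → UniformSpace.Completion X)) := by
      rw [UniformSpace.Completion.denseRange_coe.closure_range]; trivial
    have hnear : ∀ r : ℝ≥0∞, 0 < r →
        ∃ z : X, edist (↑z : UniformSpace.Completion X) p < r := by
      intro r hr
      obtain ⟨qq, ⟨z, rfl⟩, hq⟩ := EMetric.mem_closure_iff.1 hclos r hr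
      exact ⟨z, by rwa [edist_comm]⟩
    have hstepY : ∀ (u : X) (k : ℕ), ∃ z : X,
        edist (↑z : UniformSpace.Completion X) p <
          min (edist (↑u : UniformSpace.Completion X) p)
            (ENNReal.ofReal (ε' * (1/2) ^ (k+1))) :=
      fun u k => hnear _ (lt_min (hppos u) (ENNReal.ofReal_pos.2 (by positivity)))
    set Y : ℕ → X := fun n => Nat.rec x (fun k u => (hstepY u k).choose) n with hY
    have hYrec : ∀ k, edist (↑(Y (k+1)) : UniformSpace.Completion X) p <
        min (edist (↑(Y k) : UniformSpace.Completion X) p)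
          (ENNReal.ofReal (ε' * (1/2) ^ (k+1))) :=
      fun k => (hstepY (Y k) k).choose_spec
    have hYne : ∀ k, Y k ≠ Y (k+1) := by
      intro k h
      have h2 := (lt_min_iff.1 (hYrec k)).1
      rw [← h] at h2
      exact lt_irrefl _ h2
    have hYb : ∀ k, edist (↑(Y (k+1)) : UniformSpace.Completion X) p ≤
        ENNReal.ofReal (ε' * (1/2) ^ (k+1)) :=
      fun k => le_of_lt (lt_min_iff.1 (hYrec k)).2
    have hq : ∀ k, ∃ qq : G.Walk (Y k) (Y (k+1)),
        walkLength w qq < dist (Y k) (Y (k+1)) + ε' * (1/2) ^ k :=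
      fun k => exists_walk_lt w hc hdist _ _ (by positivity)
    set q : ∀ k, G.Walk (Y k) (Y (k+1)) := fun k => (hq k).choose with hqdef
    have hqspec : ∀ k, walkLength w (q k) < dist (Y k) (Y (k+1)) + ε' * (1/2) ^ k :=
      fun k => (hq k).choose_spec
    have hqlen : ∀ k, 1 ≤ (q k).length := by
      intro k
      rcases Nat.eq_zero_or_pos (q k).length with h | h
      · exact absurd (SimpleGraph.Walk.eq_of_length_eq_zero h) (hYne k)
      · exact h
    set W : ∀ k, G.Walk x (Y k) :=
      fun n => Nat.rec (motive := fun k => G.Walk x (Y k)) SimpleGraph.Walk.nil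
        (fun k Wk => Wk.append (q k)) n with hW
    have hWs : ∀ k, (W (k+1)).length = (W k).length + (q k).length :=
      fun k => SimpleGraph.Walk.length_append _ _
    have hWlen : ∀ k, k ≤ (W k).length := by
      intro k
      induction k with
      | zero => exact Nat.zero_le _
      | succ k ih =>
        have h1 := hWs k
        have h2 := hqlen k
        omega
    have hWmono : ∀ k, (W k).length ≤ (W (k+1)).length := by
      intro k; have := hWs k; omega
    have hlenmono : ∀ k j, k ≤ j → (W k).length ≤ (W j).length := by
      intro k j hkj
      induction j, hkj using Nat.le_induction with
      | base => exact le_rfl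
      | succ j hkj ih => exact le_trans ih (hWmono j)
    have hcons : ∀ k i, i ≤ (W k).length → (W (k+1)).getVert i = (W k).getVert i := by
      intro k i hi
      show ((W k).append (q k)).getVert i = _
      rw [SimpleGraph.Walk.getVert_append]
      rcases lt_or_eq_of_le hi with h | h
      · rw [if_pos h]
      · subst h
        rw [if_neg (lt_irrefl _), Nat.sub_self, SimpleGraph.Walk.getVert_zero,
          SimpleGraph.Walk.getVert_length]
    have hconsist : ∀ k j i, k ≤ j → i ≤ (W k).length →
        (W j).getVert i = (W k).getVert i := by
      intro k j i hkj hi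
      induction j, hkj using Nat.le_induction with
      | base => rfl
      | succ j hkj ih =>
        rw [hcons j i (le_trans hi (hlenmono k j hkj)), ih]
    set γ : ℕ → X := fun n => (W (n+1)).getVert n with hγdef
    have hγW : ∀ n k, n + 1 ≤ k → γ n = (W k).getVert n := by
      intro n k hk
      have h1 : n ≤ (W (n+1)).length := le_trans (Nat.le_succ n) (hWlen (n+1))
      exact (hconsist (n+1) k n hk h1).symm
    have hγ0 : γ 0 = x := SimpleGraph.Walk.getVert_zero _
    have hadjγ : ∀ n, G.Adj (γ n) (γ (n+1)) := by
      intro n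
      rw [hγW n (n+2) (by omega), hγW (n+1) (n+2) (by omega)]
      exact SimpleGraph.Walk.adj_getVert_succ _ (lt_of_lt_of_le (by omega) (hWlen (n+2)))
    refine le_trans (iInf₂_le γ ⟨hγ0, hadjγ⟩) ?_
    -- bound the total length
    have hdY : ∀ j, dist (Y j) (Y (j+1)) ≤
        (if j = 0 then e else ε' * (1/2) ^ j) + ε' * (1/2) ^ (j+1) := by
      intro j
      have h1 : dist (Y j) (Y (j+1)) =
          dist (↑(Y j) : UniformSpace.Completion X) ↑(Y (j+1)) :=
        (UniformSpace.Completion.dist_eq _ _).symm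
      rw [h1]
      refine le_trans (dist_triangle _ p _) (add_le_add ?_ ?_)
      · rcases eq_or_ne j 0 with hj | hj
        · subst hj
          rw [if_pos rfl, dist_edist]
          exact le_rfl
        · rw [if_neg hj, dist_edist]
          obtain ⟨i, rfl⟩ : ∃ i, j = i + 1 := ⟨j - 1, by omega⟩
          exact ENNReal.toReal_le_of_le_ofReal (by positivity) (hYb i)
      · rw [dist_comm, dist_edist]
        exact ENNReal.toReal_le_of_le_ofReal (by positivity) (hYb j)
    have hwl : ∀ j, walkLength w (q j) ≤
        e * (if j = 0 then 1 else 0) + 3 * ε' * (1/2) ^ j := by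
      intro j
      have h1 := hqspec j
      have h2 := hdY j
      have h3 : (0:ℝ) < (1/2:ℝ) ^ j := by positivity
      have h5 : ε' * (1/2:ℝ) ^ (j+1) ≤ ε' * (1/2) ^ j := by
        have hpw : ((1:ℝ)/2) ^ (j+1) ≤ (1/2) ^ j :=
          pow_le_pow_of_le_one (by norm_num) (by norm_num) (Nat.le_succ j)
        exact mul_le_mul_of_nonneg_left hpw hε'pos.le
      have h6 : 0 < ε' * (1/2:ℝ) ^ j := by positivity
      rcases eq_or_ne j 0 with hj | hj
      · subst hj
        rw [if_pos rfl] at h2 ⊢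
        linarith
      · rw [if_neg hj] at h2 ⊢
        linarith
    have hWsum : ∀ k, walkLength w (W k) = ∑ j ∈ Finset.range k, walkLength w (q j) := by
      intro k
      induction k with
      | zero =>
        simp only [Finset.range_zero, Finset.sum_empty]
        exact walkLength_nil w
      | succ k ih =>
        rw [Finset.sum_range_succ, ← ih]
        exact walkLength_append w (W k) (q k)
    have hWb : ∀ k, walkLength w (W k) ≤ e + 6 * ε' := by
      intro k
      rw [hWsum k]
      have hc1 : ∑ j ∈ Finset.range k, walkLength w (q j) ≤
          ∑ j ∈ Finset.range k, (e * (if j = 0 then 1 else 0) + 3 * ε' * (1/2) ^ j) :=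
        Finset.sum_le_sum fun j _ => hwl j
      have hc2 : ∑ j ∈ Finset.range k, (e * (if j = 0 then 1 else 0) + 3 * ε' * (1/2) ^ j)
          = e * (∑ j ∈ Finset.range k, (if j = 0 then (1:ℝ) else 0))
            + 3 * ε' * ∑ j ∈ Finset.range k, (1/2:ℝ) ^ j := by
        rw [Finset.sum_add_distrib, Finset.mul_sum, Finset.mul_sum]
      have hs1 : (∑ j ∈ Finset.range k, (if j = 0 then (1:ℝ) else 0)) ≤ 1 := by
        rw [Finset.sum_ite_eq']
        split_ifs <;> norm_num
      have hs2 := sum_geometric_two_le k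
      have hb1 := mul_le_mul_of_nonneg_left hs1 he0
      have hb2 := mul_le_mul_of_nonneg_left hs2 (by positivity : (0:ℝ) ≤ 3 * ε')
      linarith
    have hpartial : ∀ N, ∑ n ∈ Finset.range N, ENNReal.ofReal (w (γ n) (γ (n+1)))
        ≤ ENNReal.ofReal (e + 6 * ε') := by
      intro N
      have hrw : ∀ n ∈ Finset.range N, ENNReal.ofReal (w (γ n) (γ (n+1)))
          = ENNReal.ofReal (w ((W (N+1)).getVert n) ((W (N+1)).getVert (n+1))) := by
        intro n hn
        rw [Finset.mem_range] at hn
        rw [hγW n (N+1) (by omega), hγW (n+1) (N+1) (by omega)]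
      rw [Finset.sum_congr rfl hrw, ← ENNReal.ofReal_sum_of_nonneg (fun i _ => hw_nonneg _ _)]
      apply ENNReal.ofReal_le_ofReal
      calc ∑ n ∈ Finset.range N, w ((W (N+1)).getVert n) ((W (N+1)).getVert (n+1))
          ≤ ∑ n ∈ Finset.range (W (N+1)).length,
              w ((W (N+1)).getVert n) ((W (N+1)).getVert (n+1)) := by
            apply Finset.sum_le_sum_of_subset_of_nonneg
            · exact Finset.range_subset_range.2 (le_trans (Nat.le_succ N) (hWlen (N+1)))
            · intro i _ _; exact hw_nonneg _ _
        _ = walkLength w (W (N+1)) := (walkLength_eq_sum w _).symm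
        _ ≤ e + 6 * ε' := hWb (N+1)
    refine le_trans (ENNReal.tsum_le_of_sum_range_le hpartial) ?_
    rw [ENNReal.ofReal_add he0 (by positivity), ENNReal.ofReal_toReal hnetop]
    have h6 : ENNReal.ofReal (6 * ε') = (ε : ℝ≥0∞) := by
      rw [show 6 * ε' = ((ε:ℝ)) from by rw [hε']; ring, ENNReal.ofReal_coe_nnreal]
    rw [h6]
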